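/- Gentle measurement lemma: let Φ be a density operator and Λ a Hermitian operator with 0 ≤ Λ ≤ I on a finite-dimensional Hilbert space. If tr[ΛΦ] ≥ 1 − ε for some 0 ≤ ε ≤ 1, then the normalized post-measurement state Φ' = √Λ Φ √Λ / tr[ΛΦ] satisfies ‖Φ − Φ'‖₁ ≤ 2√ε. -/

import Mathlib

open scoped Matrix Kronecker ComplexOrder
open Matrix MeasureTheory

noncomputable section

def Matrix.PosSemidef.sqrt {n 𝕜 : Type*} [Fintype n] [RCLike 𝕜] [DecidableEq n]
    {A : Matrix n n 𝕜} (hA : A.PosSemidef) : Matrix n n 𝕜 :=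
  hA.1.eigenvectorUnitary.1 * diagonal ((↑) ∘ Real.sqrt ∘ hA.1.eigenvalues) *
    (star hA.1.eigenvectorUnitary : Matrix n n 𝕜)

def traceNorm {n : Type*} [Fintype n] [DecidableEq n] (A : Matrix n n ℂ) : ℝ :=
  ((Matrix.posSemidef_conjTranspose_mul_self A).sqrt.trace).re

def IsDensity {n : Type*} [Fintype n] (ρ : Matrix n n ℂ) : Prop :=
  ρ.PosSemidef ∧ ρ.trace = 1

def ptraceB {a b : Type*} [Fintype b] (M : Matrix (a × b) (a × b) ℂ) : Matrix a a ℂ :=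
  Matrix.of fun i j => ∑ x : b, M (i, x) (j, x)

def ptraceA {a b : Type*} [Fintype a] (M : Matrix (a × b) (a × b) ℂ) : Matrix b b ℂ :=
  Matrix.of fun i j => ∑ x : a, M (x, i) (x, j)

def condMinEntropy {x c : Type*} [Fintype x] [DecidableEq x] [Fintype c] [DecidableEq c]
    (ρ : Matrix (x × c) (x × c) ℂ) : ℝ :=
  sSup {l : ℝ | ∃ σ : Matrix c c ℂ, IsDensity σ ∧
    ((((2:ℝ) ^ (-l) : ℝ) : ℂ) • ((1 : Matrix x x ℂ) ⊗ₖ σ) - ρ).PosSemidef}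

def outer {n : Type*} (v : n → ℂ) : Matrix n n ℂ :=
  Matrix.of fun i j => v i * star (v j)

namespace Matrix.PosSemidef

variable {n : Type*} [Fintype n] [DecidableEq n]

theorem sqrt_eq_conj {A : Matrix n n ℂ} (hA : A.PosSemidef) :
    hA.sqrt = (hA.1.eigenvectorUnitary : Matrix n n ℂ) *
      diagonal (fun i => ((Real.sqrt (hA.1.eigenvalues i) : ℝ) : ℂ)) *
      star (hA.1.eigenvectorUnitary : Matrix n n ℂ) := rfl

theorem posSemidef_sqrt {A : Matrix n n ℂ} (hA : A.PosSemidef) : hA.sqrt.PosSemidef := by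
  rw [sqrt_eq_conj]
  have hd : (diagonal (fun i => ((Real.sqrt (hA.1.eigenvalues i) : ℝ) : ℂ))).PosSemidef := by
    refine Matrix.posSemidef_diagonal_iff.mpr fun i => ?_
    rw [Complex.le_def]
    simp [Real.sqrt_nonneg]
  exact hd.mul_mul_conjTranspose_same _

theorem sqrt_mul_self {A : Matrix n n ℂ} (hA : A.PosSemidef) : hA.sqrt * hA.sqrt = A := by
  obtain ⟨U, hU⟩ : ∃ U : Matrix n n ℂ, U = hA.1.eigenvectorUnitary := ⟨_, rfl⟩
  have hsq : hA.sqrt = U * diagonal (fun i => ((Real.sqrt (hA.1.eigenvalues i) : ℝ) : ℂ))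
      * star U := by rw [hU]; rfl
  have hUU' : star U * U = 1 := by
    rw [hU]; exact (Matrix.mem_unitaryGroup_iff').mp hA.1.eigenvectorUnitary.2
  have h : A = U * diagonal (fun i => ((hA.1.eigenvalues i : ℝ) : ℂ)) * star U := by
    rw [hU]
    have h0 := hA.1.spectral_theorem
    rw [Unitary.conjStarAlgAut_apply] at h0
    exact h0
  calc hA.sqrt * hA.sqrt
      = U * (diagonal (fun i => ((Real.sqrt (hA.1.eigenvalues i) : ℝ) : ℂ)) * (star U * U) *
        diagonal (fun i => ((Real.sqrt (hA.1.eigenvalues i) : ℝ) : ℂ))) * star U := by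
        rw [hsq]; noncomm_ring
    _ = U * (diagonal (fun i => ((Real.sqrt (hA.1.eigenvalues i) : ℝ) : ℂ)) *
        diagonal (fun i => ((Real.sqrt (hA.1.eigenvalues i) : ℝ) : ℂ))) * star U := by
        rw [hUU', Matrix.mul_one]
    _ = A := by
        rw [diagonal_mul_diagonal]
        conv_rhs => rw [h]
        have hd : (fun i => ((Real.sqrt (hA.1.eigenvalues i) : ℝ) : ℂ) *
            ((Real.sqrt (hA.1.eigenvalues i) : ℝ) : ℂ)) = fun i => ((hA.1.eigenvalues i : ℝ) : ℂ) := by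
          funext i
          rw [← Complex.ofReal_mul, Real.mul_self_sqrt (hA.eigenvalues_nonneg i)]
        rw [hd]

open scoped MatrixOrder in
theorem eq_sqrt_of_sq_eq {A B : Matrix n n ℂ} (hA : A.PosSemidef) (hB : B.PosSemidef)
    (h : A ^ 2 = B) : A = hB.sqrt := by
  have h1 : CFC.sqrt B = A :=
    CFC.sqrt_unique (by rw [← h, sq]) (Matrix.nonneg_iff_posSemidef.mpr hA)
  have h2 : CFC.sqrt B = hB.sqrt :=
    CFC.sqrt_unique hB.sqrt_mul_self (Matrix.nonneg_iff_posSemidef.mpr hB.posSemidef_sqrt)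
  rw [← h1, h2]

end Matrix.PosSemidef

namespace GM

variable {m : Type*} [Fintype m] [DecidableEq m]

lemma traceNorm_eq_sum (M : Matrix m m ℂ) (hM : M.IsHermitian) :
    traceNorm M = ∑ i, |hM.eigenvalues i| := by
  set U : Matrix m m ℂ := (hM.eigenvectorUnitary : Matrix m m ℂ) with hUdef
  have hUU : U * star U = 1 := (Matrix.mem_unitaryGroup_iff).mp hM.eigenvectorUnitary.2
  have hUU' : star U * U = 1 := (Matrix.mem_unitaryGroup_iff').mp hM.eigenvectorUnitary.2
  set D : Matrix m m ℂ := diagonal (fun i => ((hM.eigenvalues i : ℝ) : ℂ)) with hDdef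
  set S : Matrix m m ℂ := U * diagonal (fun i => ((|hM.eigenvalues i| : ℝ) : ℂ)) * star U with hSdef
  have hspec : M = U * D * star U := by
    have h := hM.spectral_theorem; rw [Unitary.conjStarAlgAut_apply] at h; exact h
  have hdiagpsd : (diagonal (fun i => ((|hM.eigenvalues i| : ℝ) : ℂ))).PosSemidef := by
    refine Matrix.posSemidef_diagonal_iff.mpr fun i => ?_
    rw [Complex.le_def]
    simp [abs_nonneg]
  have hSpsd : S.PosSemidef := by
    simpa [Matrix.star_eq_conjTranspose, hSdef] using hdiagpsd.mul_mul_conjTranspose_same U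
  have conjmul : ∀ A B : Matrix m m ℂ,
      (U * A * star U) * (U * B * star U) = U * (A * B) * star U := by
    intro A B
    calc (U * A * star U) * (U * B * star U) = U * (A * (star U * U) * B) * star U := by
          noncomm_ring
      _ = U * (A * B) * star U := by rw [hUU', Matrix.mul_one]
  have key : diagonal (fun i => ((|hM.eigenvalues i| : ℝ) : ℂ)) *
      diagonal (fun i => ((|hM.eigenvalues i| : ℝ) : ℂ)) = D * D := by
    rw [hDdef, diagonal_mul_diagonal, diagonal_mul_diagonal]
    have h : ∀ i, ((|hM.eigenvalues i| : ℝ) : ℂ) * ((|hM.eigenvalues i| : ℝ) : ℂ)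
        = ((hM.eigenvalues i : ℝ) : ℂ) * ((hM.eigenvalues i : ℝ) : ℂ) := fun i => by
      rw [← Complex.ofReal_mul, ← Complex.ofReal_mul, abs_mul_abs_self]
    simp only [h]
  have hS2 : S ^ 2 = Mᴴ * M := by
    rw [hM.eq, pow_two, hspec, hSdef, conjmul, conjmul, key]
  have hSsqrt : S = (Matrix.posSemidef_conjTranspose_mul_self M).sqrt :=
    hSpsd.eq_sqrt_of_sq_eq _ hS2
  rw [traceNorm, ← hSsqrt, hSdef, Matrix.trace_mul_cycle, hUU', Matrix.one_mul,
    Matrix.trace_diagonal]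
  simp


lemma trace_mul_diagonal' (W : Matrix m m ℂ) (d : m → ℂ) :
    (W * diagonal d).trace = ∑ i, W i i * d i := by
  simp [Matrix.trace, Matrix.mul_apply, Matrix.diagonal, Matrix.diag, Finset.sum_ite_eq,
    Matrix.of_apply]

lemma entry_eq (V U : Matrix m m ℂ) (i : m) :
    (star U * V * U) i i = star (fun k => U k i) ⬝ᵥ (V *ᵥ fun k => U k i) := by
  simp only [Matrix.mul_apply, Matrix.mulVec, dotProduct, Matrix.star_apply,
    Pi.star_apply, Finset.sum_mul, Finset.mul_sum]
  rw [Finset.sum_comm]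
  apply Finset.sum_congr rfl; intro k _
  apply Finset.sum_congr rfl; intro l _
  ring

lemma col_norm_one (U : Matrix m m ℂ) (hUU' : star U * U = 1) (i : m) :
    star (fun k => U k i) ⬝ᵥ (fun k => U k i) = 1 := by
  have : star (fun k => U k i) ⬝ᵥ (fun k => U k i) = (star U * U) i i := by
    simp [Matrix.mul_apply, dotProduct, Matrix.star_apply]
  rw [this, hUU', Matrix.one_apply_eq]

lemma re_trace_mul_le (M V : Matrix m m ℂ) (hM : M.IsHermitian)
    (hV : ∀ x : m → ℂ, ‖star x ⬝ᵥ (V *ᵥ x)‖ ≤ (star x ⬝ᵥ x).re) :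
    ((V * M).trace).re ≤ traceNorm M := by
  rw [traceNorm_eq_sum M hM]
  set U : Matrix m m ℂ := (hM.eigenvectorUnitary : Matrix m m ℂ) with hUdef
  have hUU' : star U * U = 1 := (Matrix.mem_unitaryGroup_iff').mp hM.eigenvectorUnitary.2
  set D : Matrix m m ℂ := diagonal (fun i => ((hM.eigenvalues i : ℝ) : ℂ)) with hDdef
  have hspec : M = U * D * star U := by
    have h := hM.spectral_theorem; rw [Unitary.conjStarAlgAut_apply] at h; exact h
  have hMeq : V * M = V * (U * D * star U) := by rw [← hspec]
  have htr : (V * (U * D * star U)).trace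
      = ∑ i, (star U * V * U) i i * ((hM.eigenvalues i : ℝ) : ℂ) := by
    have h1 : V * (U * D * star U) = (V * U * D) * star U := by noncomm_ring
    rw [h1, Matrix.trace_mul_comm]
    have h2 : star U * (V * U * D) = (star U * V * U) * D := by noncomm_ring
    rw [h2, hDdef, trace_mul_diagonal']
  rw [hMeq, htr, Complex.re_sum]
  apply Finset.sum_le_sum
  intro i _
  set c : m → ℂ := fun k => U k i with hc
  have h1 : (star U * V * U) i i = star c ⬝ᵥ (V *ᵥ c) := entry_eq V U i
  have h2 : (star c ⬝ᵥ c).re = 1 := by rw [col_norm_one U hUU' i]; simp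
  have h3 : ‖star c ⬝ᵥ (V *ᵥ c)‖ ≤ 1 := by
    have := hV c; rwa [h2] at this
  have h4 : |((star U * V * U) i i).re| ≤ 1 := by
    rw [h1]
    exact le_trans (Complex.abs_re_le_norm _) h3
  have h5 : (((star U * V * U) i i) * ((hM.eigenvalues i : ℝ) : ℂ)).re
      = ((star U * V * U) i i).re * hM.eigenvalues i := by
    rw [Complex.mul_re]; simp
  rw [h5]
  calc ((star U * V * U) i i).re * hM.eigenvalues i
      ≤ |((star U * V * U) i i).re * hM.eigenvalues i| := le_abs_self _
    _ = |((star U * V * U) i i).re| * |hM.eigenvalues i| := abs_mul _ _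
    _ ≤ 1 * |hM.eigenvalues i| := by
        apply mul_le_mul_of_nonneg_right h4 (abs_nonneg _)
    _ = |hM.eigenvalues i| := one_mul _

lemma exists_dual (M : Matrix m m ℂ) (hM : M.IsHermitian) :
    ∃ V : Matrix m m ℂ, (∀ x : m → ℂ, star (V *ᵥ x) ⬝ᵥ (V *ᵥ x) = star x ⬝ᵥ x) ∧
      ((V * M).trace).re = traceNorm M := by
  set U : Matrix m m ℂ := (hM.eigenvectorUnitary : Matrix m m ℂ) with hUdef
  have hUU : U * star U = 1 := (Matrix.mem_unitaryGroup_iff).mp hM.eigenvectorUnitary.2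
  have hUU' : star U * U = 1 := (Matrix.mem_unitaryGroup_iff').mp hM.eigenvectorUnitary.2
  set D : Matrix m m ℂ := diagonal (fun i => ((hM.eigenvalues i : ℝ) : ℂ)) with hDdef
  have hspec : M = U * D * star U := by
    have h := hM.spectral_theorem; rw [Unitary.conjStarAlgAut_apply] at h; exact h
  set s : m → ℂ := fun i => if 0 ≤ hM.eigenvalues i then 1 else -1 with hs
  set V : Matrix m m ℂ := U * diagonal s * star U with hVdef
  have hself : star (diagonal s) = diagonal s := by
    rw [Matrix.star_eq_conjTranspose, Matrix.diagonal_conjTranspose]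
    have h : star s = s := by
      funext i
      by_cases h : 0 ≤ hM.eigenvalues i <;> simp [hs, h]
    rw [h]
  have h1 : star V = V := by
    rw [hVdef, Matrix.star_mul, Matrix.star_mul, star_star, hself, ← Matrix.mul_assoc]
  have hDs2 : diagonal s * diagonal s = 1 := by
    rw [diagonal_mul_diagonal]
    have h2 : (fun i => s i * s i) = fun _ => (1 : ℂ) := by
      funext i
      by_cases h : 0 ≤ hM.eigenvalues i <;> simp [hs, h]
    rw [h2]
    exact Matrix.diagonal_one
  have hVsV : star V * V = 1 := by
    rw [h1, hVdef]
    calc (U * diagonal s * star U) * (U * diagonal s * star U)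
        = U * (diagonal s * (star U * U) * diagonal s) * star U := by noncomm_ring
      _ = U * (diagonal s * diagonal s) * star U := by rw [hUU', Matrix.mul_one]
      _ = 1 := by rw [hDs2, Matrix.mul_one, hUU]
  refine ⟨V, ?_, ?_⟩
  · intro x
    rw [Matrix.star_mulVec, Matrix.dotProduct_mulVec, Matrix.vecMul_vecMul,
      ← Matrix.star_eq_conjTranspose, hVsV, Matrix.vecMul_one]
  · have hMeq : V * M = V * (U * D * star U) := by rw [← hspec]
    have htr : V * (U * D * star U) = U * (diagonal s * D) * star U := by
      rw [hVdef]
      calc (U * diagonal s * star U) * (U * D * star U)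
          = U * (diagonal s * (star U * U) * D) * star U := by noncomm_ring
        _ = U * (diagonal s * D) * star U := by rw [hUU', Matrix.mul_one]
    rw [hMeq, htr, Matrix.trace_mul_cycle, ← Matrix.mul_assoc, hUU', Matrix.one_mul, hDdef,
      diagonal_mul_diagonal, Matrix.trace_diagonal, traceNorm_eq_sum M hM, Complex.re_sum]
    apply Finset.sum_congr rfl
    intro i _
    by_cases h : 0 ≤ hM.eigenvalues i
    · simp [hs, h, abs_of_nonneg h]
    · simp [hs, h, abs_of_neg (not_le.mp h)]

lemma cs (x y : m → ℂ) :
    ‖star x ⬝ᵥ y‖ ≤ Real.sqrt (star x ⬝ᵥ x).re * Real.sqrt (star y ⬝ᵥ y).re := by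
  have h1 := EuclideanSpace.inner_toLp_toLp (𝕜 := ℂ) (ι := m) x y
  have h2 := EuclideanSpace.inner_toLp_toLp (𝕜 := ℂ) (ι := m) x x
  have h3 := EuclideanSpace.inner_toLp_toLp (𝕜 := ℂ) (ι := m) y y
  rw [dotProduct_comm] at h1 h2 h3
  have hb := norm_inner_le_norm (𝕜 := ℂ) (WithLp.toLp 2 x) (WithLp.toLp 2 y)
  have hXn : ‖WithLp.toLp 2 x‖ = Real.sqrt (star x ⬝ᵥ x).re := by
    rw [@norm_eq_sqrt_re_inner ℂ, h2]
    norm_num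
  have hYn : ‖WithLp.toLp 2 y‖ = Real.sqrt (star y ⬝ᵥ y).re := by
    rw [@norm_eq_sqrt_re_inner ℂ, h3]
    norm_num
  rw [hXn, hYn, h1] at hb
  exact hb

lemma dot_self_nonneg (x : m → ℂ) : 0 ≤ (star x ⬝ᵥ x).re := by
  rw [dotProduct, Complex.re_sum]
  apply Finset.sum_nonneg
  intro i _
  have h : star x i * x i = ((Complex.normSq (x i) : ℝ) : ℂ) := by
    rw [Pi.star_apply, Complex.star_def, mul_comm, Complex.mul_conj]
  rw [h]
  simp [Complex.normSq_nonneg]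

lemma ptraceB_herm {a b : Type*} [Fintype a] [Fintype b]
    (M : Matrix (a × b) (a × b) ℂ) (hM : M.IsHermitian) :
    (Matrix.of fun i j => ∑ x : b, M (i, x) (j, x) : Matrix a a ℂ).IsHermitian := by
  rw [Matrix.IsHermitian]
  ext i j
  simp only [Matrix.conjTranspose_apply, Matrix.of_apply, star_sum]
  apply Finset.sum_congr rfl
  intro z _
  exact hM.apply (i, z) (j, z)

lemma kron_trace_eq {a b : Type*} [Fintype a] [DecidableEq a] [Fintype b] [DecidableEq b]
    (V : Matrix a a ℂ) (M : Matrix (a × b) (a × b) ℂ) :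
    ((V ⊗ₖ (1 : Matrix b b ℂ)) * M).trace
      = (V * (Matrix.of fun i j => ∑ x : b, M (i, x) (j, x) : Matrix a a ℂ)).trace := by
  simp only [Matrix.trace, Matrix.diag, Matrix.mul_apply, Matrix.of_apply,
    Matrix.kroneckerMap_apply, Matrix.one_apply, Fintype.sum_prod_type, Finset.mul_sum,
    Finset.sum_mul]
  apply Finset.sum_congr rfl
  intro i _
  rw [Finset.sum_comm]
  apply Finset.sum_congr rfl
  intro j _
  apply Finset.sum_congr rfl
  intro y _
  rw [Finset.sum_eq_single y]
  · simp [mul_comm]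
  · intro z _ hz
    simp [Ne.symm hz]
  · intro h
    exact absurd (Finset.mem_univ y) h

lemma kron_mulVec {a b : Type*} [Fintype a] [DecidableEq a] [Fintype b] [DecidableEq b]
    (V : Matrix a a ℂ) (x : (a × b) → ℂ) (i : a) (y : b) :
    ((V ⊗ₖ (1 : Matrix b b ℂ)) *ᵥ x) (i, y) = (V *ᵥ fun j => x (j, y)) i := by
  simp only [Matrix.mulVec, dotProduct, Matrix.kroneckerMap_apply, Matrix.one_apply,
    Fintype.sum_prod_type]
  apply Finset.sum_congr rfl
  intro j _
  rw [Finset.sum_eq_single y]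
  · simp
  · intro z _ hz
    simp [Ne.symm hz]
  · intro h
    exact absurd (Finset.mem_univ y) h

lemma traceNorm_ptraceB_le {a b : Type*} [Fintype a] [DecidableEq a] [Fintype b] [DecidableEq b]
    (M : Matrix (a × b) (a × b) ℂ) (hM : M.IsHermitian) :
    traceNorm (Matrix.of fun i j => ∑ x : b, M (i, x) (j, x) : Matrix a a ℂ) ≤ traceNorm M := by
  set P : Matrix a a ℂ := Matrix.of fun i j => ∑ x : b, M (i, x) (j, x) with hP
  obtain ⟨V, hViso, hVtr⟩ := exists_dual P (ptraceB_herm M hM)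
  have hVq : ∀ x : a → ℂ, ‖star x ⬝ᵥ (V *ᵥ x)‖ ≤ (star x ⬝ᵥ x).re := by
    intro x
    calc ‖star x ⬝ᵥ (V *ᵥ x)‖
        ≤ Real.sqrt (star x ⬝ᵥ x).re * Real.sqrt (star (V *ᵥ x) ⬝ᵥ (V *ᵥ x)).re := cs _ _
      _ = Real.sqrt (star x ⬝ᵥ x).re * Real.sqrt (star x ⬝ᵥ x).re := by rw [hViso]
      _ = (star x ⬝ᵥ x).re := Real.mul_self_sqrt (dot_self_nonneg x)
  have hWq : ∀ x : (a × b) → ℂ,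
      ‖star x ⬝ᵥ ((V ⊗ₖ (1 : Matrix b b ℂ)) *ᵥ x)‖ ≤ (star x ⬝ᵥ x).re := by
    intro x
    have hsum : star x ⬝ᵥ ((V ⊗ₖ (1 : Matrix b b ℂ)) *ᵥ x)
        = ∑ y : b, star (fun j => x (j, y)) ⬝ᵥ (V *ᵥ fun j => x (j, y)) := by
      simp only [dotProduct, Fintype.sum_prod_type, Pi.star_apply]
      rw [Finset.sum_comm]
      apply Finset.sum_congr rfl
      intro y _
      apply Finset.sum_congr rfl
      intro i _
      rw [kron_mulVec]
    rw [hsum]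
    calc ‖∑ y : b, star (fun j => x (j, y)) ⬝ᵥ (V *ᵥ fun j => x (j, y))‖
        ≤ ∑ y : b, ‖star (fun j => x (j, y)) ⬝ᵥ (V *ᵥ fun j => x (j, y))‖ := by
          exact norm_sum_le _ _
      _ ≤ ∑ y : b, (star (fun j => x (j, y)) ⬝ᵥ (fun j => x (j, y))).re := by
          apply Finset.sum_le_sum
          intro y _
          exact hVq _
      _ = (star x ⬝ᵥ x).re := by
          simp only [dotProduct, Fintype.sum_prod_type, Pi.star_apply, Complex.re_sum]
          rw [Finset.sum_comm]
  calc traceNorm P = ((V * P).trace).re := hVtr.symm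
    _ = (((V ⊗ₖ (1 : Matrix b b ℂ)) * M).trace).re := by rw [kron_trace_eq]
    _ ≤ traceNorm M := re_trace_mul_le M _ hM hWq

lemma trace_mul_rank_one (V : Matrix m m ℂ) (x y : m → ℂ) :
    (V * Matrix.of (fun i j => x i * star (y j))).trace = star y ⬝ᵥ (V *ᵥ x) := by
  simp only [Matrix.trace, Matrix.diag, Matrix.mul_apply, Matrix.of_apply, dotProduct,
    Matrix.mulVec, Pi.star_apply, Finset.mul_sum]
  apply Finset.sum_congr rfl
  intro i _
  apply Finset.sum_congr rfl
  intro j _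
  ring

lemma traceNorm_rank_one_sum (x y : m → ℂ) :
    traceNorm (Matrix.of (fun i j => x i * star (y j))
        + (Matrix.of (fun i j => x i * star (y j)))ᴴ)
      ≤ 2 * (Real.sqrt (star x ⬝ᵥ x).re * Real.sqrt (star y ⬝ᵥ y).re) := by
  set X : Matrix m m ℂ := Matrix.of (fun i j => x i * star (y j)) with hXdef
  have hXconj : Xᴴ = Matrix.of (fun i j => y i * star (x j)) := by
    ext i j
    simp [hXdef, Matrix.conjTranspose_apply, mul_comm]
  have hX : (X + Xᴴ).IsHermitian := by
    rw [Matrix.IsHermitian, Matrix.conjTranspose_add, Matrix.conjTranspose_conjTranspose,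
      add_comm]
  obtain ⟨V, hViso, hVtr⟩ := exists_dual _ hX
  rw [← hVtr, Matrix.mul_add, Matrix.trace_add, Complex.add_re]
  have hnorm : ∀ z w : m → ℂ, ‖star z ⬝ᵥ (V *ᵥ w)‖
      ≤ Real.sqrt (star z ⬝ᵥ z).re * Real.sqrt (star w ⬝ᵥ w).re := by
    intro z w
    calc ‖star z ⬝ᵥ (V *ᵥ w)‖
        ≤ Real.sqrt (star z ⬝ᵥ z).re * Real.sqrt (star (V *ᵥ w) ⬝ᵥ (V *ᵥ w)).re := cs _ _
      _ = Real.sqrt (star z ⬝ᵥ z).re * Real.sqrt (star w ⬝ᵥ w).re := by rw [hViso]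
  have h1 : ((V * X).trace).re ≤ Real.sqrt (star x ⬝ᵥ x).re * Real.sqrt (star y ⬝ᵥ y).re := by
    rw [hXdef, trace_mul_rank_one]
    calc (star y ⬝ᵥ (V *ᵥ x)).re ≤ ‖star y ⬝ᵥ (V *ᵥ x)‖ := Complex.re_le_norm _
      _ ≤ Real.sqrt (star y ⬝ᵥ y).re * Real.sqrt (star x ⬝ᵥ x).re := hnorm y x
      _ = Real.sqrt (star x ⬝ᵥ x).re * Real.sqrt (star y ⬝ᵥ y).re := mul_comm _ _
  have h2 : ((V * Xᴴ).trace).re ≤ Real.sqrt (star x ⬝ᵥ x).re * Real.sqrt (star y ⬝ᵥ y).re := by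
    rw [hXconj, trace_mul_rank_one]
    calc (star x ⬝ᵥ (V *ᵥ y)).re ≤ ‖star x ⬝ᵥ (V *ᵥ y)‖ := Complex.re_le_norm _
      _ ≤ Real.sqrt (star x ⬝ᵥ x).re * Real.sqrt (star y ⬝ᵥ y).re := hnorm x y
  linarith

lemma vec_dot (C D : Matrix m m ℂ) :
    star (fun p : m × m => C p.1 p.2) ⬝ᵥ (fun p : m × m => D p.1 p.2) = (Cᴴ * D).trace := by
  simp only [dotProduct, Matrix.trace, Matrix.diag, Matrix.mul_apply,
    Matrix.conjTranspose_apply, Fintype.sum_prod_type, Pi.star_apply]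
  rw [Finset.sum_comm]

lemma psd_diag_re_nonneg (R : Matrix m m ℂ) (hR : R.PosSemidef) (i : m) : 0 ≤ (R i i).re := by
  have h := hR.re_dotProduct_nonneg (Pi.single i 1)
  have he : star (Pi.single i 1 : m → ℂ) ⬝ᵥ (R *ᵥ Pi.single i 1) = R i i := by
    simp [Matrix.mulVec_single, dotProduct, Pi.single_apply, apply_ite]
  rwa [he] at h

lemma trace_psd_mul_nonneg (P Q : Matrix m m ℂ) (hP : P.PosSemidef) (hQ : Q.PosSemidef) :
    0 ≤ ((P * Q).trace).re := by
  set S := hQ.sqrt with hS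
  have hQ2 : S * S = Q := hQ.sqrt_mul_self
  have hcyc : (P * Q).trace = (S * P * S).trace := by
    rw [← hQ2, ← Matrix.mul_assoc, Matrix.trace_mul_cycle]
  have hpsd : (S * P * S).PosSemidef := by
    have := hP.mul_mul_conjTranspose_same S
    rwa [hQ.posSemidef_sqrt.1.eq] at this
  rw [hcyc, Matrix.trace, Complex.re_sum]
  exact Finset.sum_nonneg fun i _ => psd_diag_re_nonneg _ hpsd i

lemma eigenvalues_le_one (L : Matrix m m ℂ) (hL : L.PosSemidef)
    (hL1 : ((1 : Matrix m m ℂ) - L).PosSemidef) (i : m) : hL.1.eigenvalues i ≤ 1 := by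
  set U : Matrix m m ℂ := (hL.1.eigenvectorUnitary : Matrix m m ℂ) with hUdef
  have hUU' : star U * U = 1 := (Matrix.mem_unitaryGroup_iff').mp hL.1.eigenvectorUnitary.2
  set w : m → ℂ := ⇑(hL.1.eigenvectorBasis i) with hw
  have hwU : w = fun k => U k i := by
    funext k
    rw [hUdef, Matrix.IsHermitian.eigenvectorUnitary_apply]
  have hnorm : star w ⬝ᵥ w = 1 := by rw [hwU]; exact col_norm_one U hUU' i
  have hLw : L *ᵥ w = ((hL.1.eigenvalues i : ℝ) : ℂ) • w := by
    rw [hw, hL.1.mulVec_eigenvectorBasis]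
    funext k
    simp [Complex.real_smul]
  have hre := hL1.re_dotProduct_nonneg w
  rw [Matrix.sub_mulVec, Matrix.one_mulVec, dotProduct_sub, hLw,
    dotProduct_smul, hnorm] at hre
  simp only [RCLike.re_to_complex, smul_eq_mul, mul_one, Complex.sub_re, Complex.one_re,
    Complex.ofReal_re] at hre
  linarith

lemma sqrt_sub_self_psd (L : Matrix m m ℂ) (hL : L.PosSemidef)
    (hL1 : ((1 : Matrix m m ℂ) - L).PosSemidef) : (hL.sqrt - L).PosSemidef := by
  set U : Matrix m m ℂ := (hL.1.eigenvectorUnitary : Matrix m m ℂ) with hUdef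
  have hsqrt : hL.sqrt = U * diagonal ((↑) ∘ Real.sqrt ∘ hL.1.eigenvalues) * star U := rfl
  have hspec : L = U * diagonal ((↑) ∘ hL.1.eigenvalues) * star U := by
    have := hL.1.spectral_theorem
    rw [Unitary.conjStarAlgAut_apply] at this; exact this
  have hsub : hL.sqrt - L
      = U * diagonal (fun i => ((Real.sqrt (hL.1.eigenvalues i) - hL.1.eigenvalues i : ℝ) : ℂ))
        * star U := by
    have h2 : U * diagonal (Complex.ofReal ∘ Real.sqrt ∘ hL.1.eigenvalues) * star U
        - U * diagonal (Complex.ofReal ∘ hL.1.eigenvalues) * star U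
        = U * diagonal (fun i =>
            ((Real.sqrt (hL.1.eigenvalues i) - hL.1.eigenvalues i : ℝ) : ℂ)) * star U := by
      rw [← Matrix.sub_mul, ← Matrix.mul_sub, Matrix.diagonal_sub]
      congr 2
      funext j
      simp [Complex.ofReal_sub]
    calc hL.sqrt - L
        = U * diagonal (Complex.ofReal ∘ Real.sqrt ∘ hL.1.eigenvalues) * star U
          - U * diagonal (Complex.ofReal ∘ hL.1.eigenvalues) * star U := by
          rw [hsqrt, ← hspec]
      _ = _ := h2
  rw [hsub]
  apply Matrix.PosSemidef.mul_mul_conjTranspose_same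
  refine Matrix.posSemidef_diagonal_iff.mpr fun j => ?_
  rw [Complex.le_def]
  constructor
  · simp only [Complex.zero_re, Complex.ofReal_re]
    have h0 := hL.eigenvalues_nonneg j
    have h1 := eigenvalues_le_one L hL hL1 j
    have : hL.1.eigenvalues j ≤ Real.sqrt (hL.1.eigenvalues j) := by
      nlinarith [Real.sq_sqrt h0, Real.sqrt_nonneg (hL.1.eigenvalues j)]
    linarith
  · simp

end GM


/-- Gentle measurement lemma: if `0 ≤ Λ ≤ I`, `Φ` is a state and `tr[ΛΦ] ≥ 1 − ε`, then
the normalized post-measurement state `√Λ Φ √Λ / tr[ΛΦ]` is `2√ε`-close to `Φ` in trace norm. -/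
theorem gentle_measurement
    {n : Type*} [Fintype n] [DecidableEq n]
    (Φ L : Matrix n n ℂ) (hΦ : IsDensity Φ)
    (hL : L.PosSemidef) (hL1 : ((1 : Matrix n n ℂ) - L).PosSemidef)
    (ε : ℝ) (hε0 : 0 ≤ ε) (hε1 : ε ≤ 1)
    (t : ℝ) (ht : (t : ℂ) = (L * Φ).trace) (htpos : 0 < t) (htε : 1 - ε ≤ t) :
    traceNorm (Φ - ((t : ℂ))⁻¹ • (hL.sqrt * Φ * hL.sqrt)) ≤ 2 * Real.sqrt ε := by
  classical
  set A : Matrix n n ℂ := hΦ.1.sqrt with hAdef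
  have hA : A.PosSemidef := hΦ.1.posSemidef_sqrt
  have hAH : Aᴴ = A := hA.1
  have hAA : A * A = Φ := hΦ.1.sqrt_mul_self
  set B : Matrix n n ℂ := hL.sqrt with hBdef
  have hB : B.PosSemidef := hL.posSemidef_sqrt
  have hBH : Bᴴ = B := hB.1
  have hBB : B * B = L := hL.sqrt_mul_self
  set r : ℝ := Real.sqrt t with hr
  have hrpos : 0 < r := Real.sqrt_pos.mpr htpos
  have hrr : r * r = t := Real.mul_self_sqrt htpos.le
  have ht0 : (t : ℂ) ≠ 0 := by
    simp only [ne_eq, Complex.ofReal_eq_zero]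
    exact ne_of_gt htpos
  set s : ℂ := ((r⁻¹ : ℝ) : ℂ) with hs
  have hstars : star s = s := by rw [hs, Complex.star_def, Complex.conj_ofReal]
  have hss : s * s = ((t : ℝ) : ℂ)⁻¹ := by
    rw [hs, ← Complex.ofReal_mul, ← mul_inv, hrr, Complex.ofReal_inv]
  set G : Matrix n n ℂ := B * A with hG
  have hGH : Gᴴ = A * B := by rw [hG, Matrix.conjTranspose_mul, hAH, hBH]
  set C : Matrix n n ℂ := (1/2 : ℂ) • (A - s • G) with hC
  set E : Matrix n n ℂ := A + s • G with hE
  set w : ℂ := (B * Φ).trace with hw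
  set cR : ℝ := w.re with hcR
  -- basic traces
  have hsuu : (Aᴴ * A).trace = 1 := by rw [hAH, hAA, hΦ.2]
  have hGG : Gᴴ * G = A * L * A := by
    rw [hGH, hG, ← hBB]
    noncomm_ring
  have hsvv : (Gᴴ * G).trace = (t : ℂ) := by
    rw [hGG, Matrix.trace_mul_cycle, hAA, Matrix.trace_mul_comm, ← ht]
  have hsuv : (Aᴴ * G).trace = w := by
    rw [hAH, hG, hw, ← Matrix.mul_assoc, Matrix.trace_mul_comm, ← Matrix.mul_assoc, hAA,
      Matrix.trace_mul_comm]
  have hGA : (Gᴴ * A).trace = star w := by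
    have h1 : (Aᴴ * G)ᴴ = Gᴴ * A := by simp
    rw [← h1, Matrix.trace_conjTranspose, hsuv]
  -- c ≥ t
  have hct : t ≤ cR := by
    have h1 : ((B - L) * Φ).trace = w - (t : ℂ) := by
      rw [Matrix.sub_mul, Matrix.trace_sub, ← hw, ← ht]
    have h2 := GM.trace_psd_mul_nonneg (B - L) Φ (GM.sqrt_sub_self_psd L hL hL1) hΦ.1
    rw [h1] at h2
    simp only [Complex.sub_re, Complex.ofReal_re] at h2
    rw [hcR]
    linarith
  have hcpos : 0 < cR := lt_of_lt_of_le htpos hct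
  set γ : ℝ := r⁻¹ * cR with hγ
  -- gamma bounds
  have hsw_re : (s * w).re = γ := by
    rw [hs, hγ, hcR]
    simp [Complex.mul_re]
  -- vectors
  set xv : n × n → ℂ := fun p => C p.1 p.2 with hxv
  set yv : n × n → ℂ := fun p => E p.1 p.2 with hyv
  set uv : n × n → ℂ := fun p => A p.1 p.2 with huv
  set vv : n × n → ℂ := fun p => (s • G) p.1 p.2 with hvv
  have hdot_uu : star uv ⬝ᵥ uv = 1 := by rw [huv, GM.vec_dot, hsuu]
  have hdot_vv : star vv ⬝ᵥ vv = 1 := by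
    rw [hvv, GM.vec_dot, Matrix.conjTranspose_smul, Matrix.smul_mul, Matrix.mul_smul,
      Matrix.trace_smul, Matrix.trace_smul, hsvv, hstars, smul_eq_mul, smul_eq_mul, ← mul_assoc,
      hss, inv_mul_cancel₀ ht0]
  have hdot_uv : star uv ⬝ᵥ vv = s * w := by
    rw [huv, hvv, GM.vec_dot, Matrix.mul_smul, Matrix.trace_smul, hsuv, smul_eq_mul]
  have hγ1 : γ ≤ 1 := by
    have habs := GM.cs uv vv
    rw [hdot_uu, hdot_uv, hdot_vv] at habs
    simp only [Complex.one_re, Real.sqrt_one, mul_one] at habs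
    calc γ = (s * w).re := hsw_re.symm
      _ ≤ ‖s * w‖ := Complex.re_le_norm _
      _ ≤ 1 := habs
  have hγsq : 1 - ε ≤ γ ^ 2 := by
    have h1 : γ ^ 2 = cR ^ 2 / t := by
      rw [hγ, ← hrr]
      field_simp
    have h2 : t ^ 2 ≤ cR ^ 2 := by nlinarith
    have h3 : t ≤ cR ^ 2 / t := by
      rw [le_div_iff₀ htpos]
      nlinarith
    rw [h1]
    linarith
  -- dot products for xv, yv
  have hxx : (star xv ⬝ᵥ xv).re = (2 - 2 * γ) / 4 := by
    have hCH : Cᴴ = (1/2 : ℂ) • (Aᴴ - s • Gᴴ) := by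
      rw [hC, Matrix.conjTranspose_smul, Matrix.conjTranspose_sub, Matrix.conjTranspose_smul,
        hstars]
      congr 1
      simp [Complex.star_def]
    have hexp : Cᴴ * C = (1/4 : ℂ) • (Aᴴ * A - s • (Aᴴ * G) - s • (Gᴴ * A)
        + (s * s) • (Gᴴ * G)) := by
      rw [hC, hCH]
      simp only [Matrix.smul_mul, Matrix.mul_smul, Matrix.sub_mul, Matrix.mul_sub, smul_smul,
        smul_sub, smul_add]
      module
    have hst1 : s * s * (t : ℂ) = 1 := by
      rw [hss]
      exact inv_mul_cancel₀ ht0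
    have htr : (Cᴴ * C).trace = (1/4 : ℂ) * (1 - s * w - s * star w + 1) := by
      rw [hexp, Matrix.trace_smul, Matrix.trace_add, Matrix.trace_sub, Matrix.trace_sub,
        Matrix.trace_smul, Matrix.trace_smul, Matrix.trace_smul, hsuu, hsuv, hGA, hsvv,
        smul_eq_mul, smul_eq_mul, smul_eq_mul, smul_eq_mul, hst1]
    have hz : (1 : ℂ) - s * w - s * star w + 1 = (((2 : ℝ) - 2 * γ : ℝ) : ℂ) := by
      have h1 : s * star w = star (s * w) := by
        rw [star_mul', hstars, mul_comm]
      rw [h1]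
      have h2 : s * w + star (s * w) = ((2 * (s * w).re : ℝ) : ℂ) := Complex.add_conj _
      have h3 : (1 : ℂ) - s * w - star (s * w) + 1 = 2 - (s * w + star (s * w)) := by ring
      rw [h3, h2, hsw_re]
      push_cast
      ring
    rw [hxv, GM.vec_dot, htr, hz]
    rw [show (1/4 : ℂ) = ((1/4 : ℝ) : ℂ) by norm_num, ← Complex.ofReal_mul, Complex.ofReal_re]
    ring
  have hyy : (star yv ⬝ᵥ yv).re = 2 + 2 * γ := by
    have hEH : Eᴴ = Aᴴ + s • Gᴴ := by
      rw [hE, Matrix.conjTranspose_add, Matrix.conjTranspose_smul, hstars]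
    have hexp : Eᴴ * E = Aᴴ * A + s • (Aᴴ * G) + s • (Gᴴ * A) + (s * s) • (Gᴴ * G) := by
      rw [hE, hEH]
      simp only [Matrix.smul_mul, Matrix.mul_smul, Matrix.add_mul, Matrix.mul_add, smul_smul,
        smul_add]
      module
    have hst1 : s * s * (t : ℂ) = 1 := by
      rw [hss]
      exact inv_mul_cancel₀ ht0
    have htr : (Eᴴ * E).trace = 1 + s * w + s * star w + 1 := by
      rw [hexp, Matrix.trace_add, Matrix.trace_add, Matrix.trace_add, Matrix.trace_smul,
        Matrix.trace_smul, Matrix.trace_smul, hsuu, hsuv, hGA, hsvv, smul_eq_mul, smul_eq_mul,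
        smul_eq_mul, hst1]
    have hz : (1 : ℂ) + s * w + s * star w + 1 = (((2 : ℝ) + 2 * γ : ℝ) : ℂ) := by
      have h1 : s * star w = star (s * w) := by
        rw [star_mul', hstars, mul_comm]
      rw [h1]
      have h2 : s * w + star (s * w) = ((2 * (s * w).re : ℝ) : ℂ) := Complex.add_conj _
      have h3 : (1 : ℂ) + s * w + star (s * w) + 1 = 2 + (s * w + star (s * w)) := by ring
      rw [h3, h2, hsw_re]
      push_cast
      ring
    rw [hyv, GM.vec_dot, htr, hz, Complex.ofReal_re]
  -- the rank-one matrix and partial trace identity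
  set X : Matrix (n × n) (n × n) ℂ := Matrix.of (fun p q : n × n => xv p * star (yv q)) with hX
  have hXherm : (X + Xᴴ).IsHermitian := by
    rw [Matrix.IsHermitian, Matrix.conjTranspose_add, Matrix.conjTranspose_conjTranspose,
      add_comm]
  have hkey : (Matrix.of fun i j => ∑ x : n, (X + Xᴴ) (i, x) (j, x) : Matrix n n ℂ)
      = C * Eᴴ + E * Cᴴ := by
    ext i j
    simp only [Matrix.of_apply, Matrix.add_apply, Matrix.conjTranspose_apply, hX, star_mul',
      star_star, Matrix.mul_apply]
    rw [Finset.sum_add_distrib]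
    congr 1
    apply Finset.sum_congr rfl
    intro x _
    ring
  have hGGH' : G * Gᴴ = B * (A * A) * B := by
    rw [hG, hGH]
    noncomm_ring
  have halg : C * Eᴴ + E * Cᴴ = Φ - ((t : ℂ))⁻¹ • (B * Φ * B) := by
    have hCH : Cᴴ = (1/2 : ℂ) • (A - s • Gᴴ) := by
      rw [hC, Matrix.conjTranspose_smul, Matrix.conjTranspose_sub, Matrix.conjTranspose_smul,
        hstars, hAH]
      congr 1
      simp [Complex.star_def]
    have hEH : Eᴴ = A + s • Gᴴ := by
      rw [hE, Matrix.conjTranspose_add, Matrix.conjTranspose_smul, hstars, hAH]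
    rw [hC, hCH, hE, hEH, ← hAA, ← hGGH', ← hss]
    simp only [Matrix.smul_mul, Matrix.mul_smul, Matrix.add_mul, Matrix.mul_add, Matrix.sub_mul,
      Matrix.mul_sub, smul_smul, smul_sub, smul_add]
    module
  -- put it together
  have hmono := GM.traceNorm_ptraceB_le (X + Xᴴ) hXherm
  rw [hkey, halg] at hmono
  have hrank := GM.traceNorm_rank_one_sum xv yv
  have hfinal : 2 * (Real.sqrt (star xv ⬝ᵥ xv).re * Real.sqrt (star yv ⬝ᵥ yv).re)
      ≤ 2 * Real.sqrt ε := by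
    rw [hxx, hyy, ← Real.sqrt_mul (by linarith : (0:ℝ) ≤ (2 - 2*γ)/4)]
    have harg : (2 - 2 * γ) / 4 * (2 + 2 * γ) ≤ ε := by nlinarith
    have := Real.sqrt_le_sqrt harg
    linarith
  calc traceNorm (Φ - ((t : ℂ))⁻¹ • (B * Φ * B)) ≤ traceNorm (X + Xᴴ) := hmono
    _ ≤ 2 * (Real.sqrt (star xv ⬝ᵥ xv).re * Real.sqrt (star yv ⬝ᵥ yv).re) := hrank
    _ ≤ 2 * Real.sqrt ε := hfinal
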